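/- arXiv:1605.01264 — 4 statements merged into one kernel-verified Lean document; each statement's English description precedes it below -/
import Mathlib

section
/- Let G be a finite group such that (G, Z(G)) is a generalized Camina pair. Then G' ⊆ Z(G), i.e., G is nilpotent of class at most 2. -/
open scoped BigOperators

/-- `χ : G → ℂ` is an irreducible (complex) character of `G`. -/
def IsIrrChar (G : Type) [Group G] (χ : G → ℂ) : Prop :=
  ∃ V : FDRep ℂ G, CategoryTheory.Simple V ∧ χ = V.character

/-- The commutator `[a,b] = a⁻¹ b⁻¹ a b`. -/
def wcomm {G : Type} [Group G] (a b : G) : G := a⁻¹ * b⁻¹ * a * b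

/-- The left-normed iterated commutator word
`w_n(x₁,…,xₙ) = [⋯[[x₁,x₂],x₃],⋯,xₙ]` (for `n = 0` we set it to `1`). -/
def wIter {G : Type} [Group G] : (n : ℕ) → (Fin n → G) → G
  | 0, _ => 1
  | (n+1), x => (List.ofFn fun i : Fin n => x i.succ).foldl wcomm (x 0)

/-!
Suppose some `g ∈ G'` lies outside `Z(G)`, and compute the trace of left multiplication by `g`
on `ℂ[G]` in two ways. Since `g ≠ 1` it is `0`. On the other hand, split `ℂ[G]` into simple
submodules: a nonlinear summand contributes `0` by hypothesis, while a one-dimensional summand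
contributes `1`, because a linear character is trivial on `G'`. Some summand is one-dimensional,
namely one in which the averaging element `|G|⁻¹ ∑ h` has a nonzero component, as that component
is a `G`-invariant vector. So the trace is positive, a contradiction.
-/

open CategoryTheory MonoidAlgebra Module Finset

instance Submodule.finiteDimensional_of_isScalarTower {k A M : Type*} [Field k] [Ring A]
    [Algebra k A] [AddCommGroup M] [Module k M] [Module A M] [IsScalarTower k A M]
    [FiniteDimensional k M] (N : Submodule A M) : FiniteDimensional k N :=
  inferInstanceAs (FiniteDimensional k (N.restrictScalars k))

open scoped Classical in
theorem IsSemisimpleModule.exists_finite_isInternal_simples (R M : Type*) [Ring R]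
    [AddCommGroup M] [Module R M] [IsSemisimpleModule R M] [IsNoetherian R M] :
    ∃ s : Set (Submodule R M), s.Finite ∧ DirectSum.IsInternal (fun m : s ↦ (m : Submodule R M)) ∧
      ∀ m ∈ s, IsSimpleModule R m := by
  obtain ⟨s, hind, hsup, hsimple⟩ := IsSemisimpleModule.exists_sSupIndep_sSup_simples_eq_top R M
  rw [sSupIndep_iff] at hind
  refine ⟨s, ?_, DirectSum.isInternal_submodule_of_iSupIndep_of_iSup_eq_top hind
    (by rwa [← sSup_eq_iSup']), hsimple⟩
  exact Set.finite_coe_iff.mp <| WellFoundedGT.finite_of_iSupIndep hind fun m ↦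
    (isSimpleModule_iff_isAtom.mp (hsimple m m.2)).1

theorem GroupAlgebra.average_ne_zero (k G : Type*) [Field k] [Group G] [Fintype G]
    [Invertible (Fintype.card G : k)] : average k G ≠ 0 := by
  intro h
  have h1 := congrArg (fun x ↦ x.coeff 1) h
  simp only [average, invOf_eq_inv, of_apply, coeff_smul, coeff_sum, coeff_single,
    Finsupp.coe_smul, Finsupp.coe_finsetSum, Pi.smul_apply, Finset.sum_apply,
    Finsupp.univ_sum_single_apply', smul_eq_mul, mul_one, coeff_zero, Finsupp.coe_zero,
    Pi.zero_apply, inv_eq_zero] at h1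
  exact Invertible.ne_zero _ h1

theorem FDRep.simple_of_isIrreducible {k G V : Type u} [Field k] [IsAlgClosed k] [CharZero k]
    [Group G] [Fintype G] [AddCommGroup V] [Module k V] [FiniteDimensional k V]
    (ρ : Representation k G V) [ρ.IsIrreducible] : Simple (FDRep.of ρ) := by
  have : Invertible (Nat.card G : k) := invertibleOfNonzero (by simp)
  have h := Representation.char_orthonormal ρ ρ
  rw [if_pos ⟨.refl ρ⟩, inv_mul_eq_one₀ (by simp)] at h
  exact (FDRep.simple_iff_char_is_norm_one _).mpr h.symm

namespace Representation

section

variable {k G V : Type*} [Field k] [Group G] [AddCommGroup V] [Module k V]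

theorem apply_eq_one_of_mem_commutator (ρ : Representation k G V) (hV : finrank k V = 1)
    {g : G} (hg : g ∈ commutator G) : ρ g = 1 := by
  have hcomm (a b : G) : Commute (ρ a) (ρ b) := by
    obtain ⟨c, hc⟩ := ((ρ a).existsUnique_eq_smul_id_of_finrank_eq_one hV).exists
    rw [hc]
    exact (Commute.one_left _).smul_left c
  have hker : commutator G ≤ ρ.asGroupHom.ker := by
    rw [commutator, Subgroup.commutator_le]
    intro a _ b _
    rw [MonoidHom.mem_ker, map_commutatorElement, commutatorElement_eq_one_iff_commute]
    exact Units.ext (hcomm a b)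
  rw [← asGroupHom_apply, MonoidHom.mem_ker.mp (hker hg), Units.val_one]

theorem IsIrreducible.finrank_eq_one_of_invariants_ne_bot (ρ : Representation k G V)
    [ρ.IsIrreducible] (h : ρ.invariants ≠ ⊥) : finrank k V = 1 := by
  obtain ⟨v, hv, hv0⟩ := Submodule.exists_mem_ne_zero_of_ne_bot h
  let p : Subrepresentation ρ :=
    ⟨k ∙ v, fun g w hw ↦ by
      obtain ⟨c, rfl⟩ := Submodule.mem_span_singleton.mp hw
      rw [map_smul, hv g]
      exact Submodule.smul_mem _ c (Submodule.mem_span_singleton_self v)⟩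
  rw [finrank_eq_one_iff_of_nonzero v hv0]
  rcases eq_bot_or_eq_top p with hp | hp
  · have hvp : v ∈ p.toSubmodule := Submodule.mem_span_singleton_self v
    rw [hp] at hvp
    exact absurd ((Submodule.mem_bot k).mp hvp) hv0
  · exact congrArg Subrepresentation.toSubmodule hp

end

section ofModule'

variable {k G M : Type*} [Field k] [Group G] [AddCommGroup M] [Module k M]
  [Module k[G] M] [IsScalarTower k k[G] M]

theorem ofModule'_apply (g : G) (x : M) : ofModule' (k := k) M g x = single g (1 : k) • x := rfl

theorem asAlgebraHom_ofModule' :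
    (ofModule' (k := k) (G := G) M).asAlgebraHom = Algebra.lsmul k k M :=
  (lift k _ G).apply_symm_apply _

noncomputable def ofModule'AsModuleEquiv :
    (ofModule' (k := k) (G := G) M).asModule ≃ₗ[k[G]] M where
  __ := (ofModule' (k := k) (G := G) M).asModuleEquiv
  map_smul' r x := by
    show (ofModule' (k := k) (G := G) M).asModuleEquiv (r • x) = _
    rw [asModuleEquiv_map_smul, asAlgebraHom_ofModule']
    rfl

instance isIrreducible_ofModule' [IsSimpleModule k[G] M] :
    (ofModule' (k := k) (G := G) M).IsIrreducible := by
  rw [irreducible_iff_isSimpleModule_asModule]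
  exact IsSimpleModule.congr ofModule'AsModuleEquiv

theorem character_ofModule'_eq_sum [FiniteDimensional k M] {ι : Type*} [Fintype ι]
    [DecidableEq ι] {N : ι → Submodule k[G] M} (hN : DirectSum.IsInternal N) (g : G) :
    (ofModule' (k := k) M).character g = ∑ i, (ofModule' (k := k) (N i)).character g :=
  -- `N i` and `(N i).restrictScalars k` have the same carrier, so `hN` is also a `k`-decomposition.
  LinearMap.trace_eq_sum_trace_restrict (N := fun i ↦ (N i).restrictScalars k) hN
    (fun i _ hx ↦ (N i).smul_mem _ hx)

theorem exists_invariants_ofModule'_ne_bot_of_isInternal {ι : Type*} [DecidableEq ι]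
    {N : ι → Submodule k[G] M} (hN : DirectSum.IsInternal N)
    (h : (ofModule' (k := k) (G := G) M).invariants ≠ ⊥) :
    ∃ i, (ofModule' (k := k) (G := G) (N i)).invariants ≠ ⊥ := by
  obtain ⟨v, hv, hv0⟩ := Submodule.exists_mem_ne_zero_of_ne_bot h
  let e := LinearEquiv.ofBijective (DirectSum.coeLinearMap N) hN
  obtain ⟨i, hi⟩ : ∃ i, e.symm v i ≠ 0 := by
    by_contra! hc
    exact hv0 (e.symm.injective (by rw [map_zero]; exact DFinsupp.ext hc))
  refine ⟨i, fun hbot ↦ hi ((Submodule.mem_bot k).mp (hbot ▸ fun g ↦ ?_))⟩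
  rw [ofModule'_apply, ← DFinsupp.smul_apply, ← map_smul]
  exact congrArg (e.symm · i) (hv g)

variable [Fintype G]

theorem character_ofModule'_self_eq_zero {g : G} (hg : g ≠ 1) :
    (ofModule' (k := k) k[G]).character g = 0 := by
  classical
  rw [character, LinearMap.trace_eq_matrix_trace k (MonoidAlgebra.basis G k), Matrix.trace]
  refine Finset.sum_eq_zero fun h _ ↦ ?_
  rw [Matrix.diag_apply, LinearMap.toMatrix_apply, ofModule'_apply, basis_apply, smul_eq_mul,
    single_mul_single, mul_one, ← basis_apply, Basis.repr_self, Finsupp.single_apply,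
    if_neg (by simpa using hg)]

theorem invariants_ofModule'_self_ne_bot [Invertible (Fintype.card G : k)] :
    (ofModule' (k := k) (G := G) k[G]).invariants ≠ ⊥ :=
  (Submodule.ne_bot_iff _).mpr ⟨GroupAlgebra.average k G, GroupAlgebra.mul_average_left k G,
    GroupAlgebra.average_ne_zero k G⟩

end ofModule'

end Representation

def IsGenCaminaPairCenter (G : Type) [Group G] : Prop :=
  ∀ χ : G → ℂ, IsIrrChar G χ → χ 1 ≠ 1 → ∀ g : G, g ∉ Subgroup.center G → χ g = 0

namespace IsGenCaminaPairCenter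

open Representation

variable {G : Type} [Group G] [Fintype G] (hG : IsGenCaminaPairCenter G)
  {g : G} (hg : g ∈ commutator G) (hgZ : g ∉ Subgroup.center G)
include hG hg hgZ

theorem character_eq_ite_finrank {V : Type} [AddCommGroup V] [Module ℂ V] [FiniteDimensional ℂ V]
    (ρ : Representation ℂ G V) [ρ.IsIrreducible] :
    ρ.character g = if finrank ℂ V = 1 then 1 else 0 := by
  split_ifs with hV
  · rw [character, apply_eq_one_of_mem_commutator ρ hV hg, LinearMap.trace_one, hV, Nat.cast_one]
  · refine hG _ ⟨_, FDRep.simple_of_isIrreducible ρ, rfl⟩ ?_ g hgZ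
    rw [FDRep.char_one]
    exact_mod_cast hV

theorem character_ofModule'_eq_card {M : Type} [AddCommGroup M] [Module ℂ M] [Module ℂ[G] M]
    [IsScalarTower ℂ ℂ[G] M] [FiniteDimensional ℂ M] {ι : Type*} [Fintype ι] [DecidableEq ι]
    {N : ι → Submodule ℂ[G] M} (hN : DirectSum.IsInternal N)
    (hsimple : ∀ i, IsSimpleModule ℂ[G] (N i)) :
    (ofModule' (k := ℂ) M).character g = #{i | finrank ℂ (N i) = 1} := by
  rw [character_ofModule'_eq_sum hN, Finset.natCast_card_filter]
  refine Finset.sum_congr rfl fun i _ ↦ ?_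
  have := hsimple i
  exact hG.character_eq_ite_finrank hg hgZ (ofModule' (N i))

end IsGenCaminaPairCenter

open Representation in
theorem stmt_7_general {G : Type} [Group G] [Fintype G]
    (hGCP : ∀ χ : G → ℂ, IsIrrChar G χ → χ 1 ≠ 1 →
      ∀ g : G, g ∉ Subgroup.center G → χ g = 0) :
    commutator G ≤ Subgroup.center G := by
  classical
  intro g hg
  by_contra hgZ
  have : Invertible (Fintype.card G : ℂ) := invertibleOfNonzero (by simp)
  obtain ⟨s, hfin, hN, hsimple⟩ := IsSemisimpleModule.exists_finite_isInternal_simples ℂ[G] ℂ[G]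
  have := hfin.fintype
  have hcount := IsGenCaminaPairCenter.character_ofModule'_eq_card hGCP hg hgZ hN
    (fun m ↦ hsimple m m.2)
  rw [character_ofModule'_self_eq_zero (fun h : g = 1 ↦ hgZ (h ▸ (Subgroup.center G).one_mem)),
    eq_comm, Nat.cast_eq_zero, Finset.card_eq_zero, Finset.filter_eq_empty_iff] at hcount
  obtain ⟨i, hi⟩ :=
    exists_invariants_ofModule'_ne_bot_of_isInternal hN invariants_ofModule'_self_ne_bot
  have := hsimple i i.2
  exact hcount (Finset.mem_univ i) (IsIrreducible.finrank_eq_one_of_invariants_ne_bot _ hi)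

theorem stmt_7 {G : Type} [Group G] [Fintype G]
    (hna : ∃ a b : G, a * b ≠ b * a)
    (hGCP : ∀ χ : G → ℂ, IsIrrChar G χ → χ 1 ≠ 1 →
      ∀ g : G, g ∉ Subgroup.center G → χ g = 0) :
    commutator G ≤ Subgroup.center G :=
  stmt_7_general hGCP
end

section
/- Let G and H be finite groups that are n-isoclinic via the pair (φ, ψ), where φ : G/Zₙ(G) → H/Zₙ(H) and ψ : γ_{n+1}(G) → γ_{n+1}(H) are compatible isomorphisms. Then for every g ∈ γ_{n+1}(G), the number of (n+1)-tuples in G^{n+1} whose left-normed iterated commutator equals g is (|G|/|H|)^{n+1} times the number of (n+1)-tuples in H^{n+1} whose left-normed iterated commutator equals ψ(g). -/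
/-!
If the two quotients `G ⧸ Zₙ(G)` and `H ⧸ Zₙ(H)` are matched by `φ` and the commutator word is
transported by the injection `ψ`, then `wₙ₊₁` factors through the cosets of `Zₙ` on both sides, and
`ψ` carries the coset-level fibres of `G` bijectively onto those of `H`. Each coset-level solution
lifts to `|Zₙ|ⁿ⁺¹` solutions, and `|G| / |H| = |Zₙ(G)| / |Zₙ(H)|` because the quotients have the
same order.
-/

open scoped BigOperators

open Function
open scoped commutatorElement

section LowerCentralSeries

variable {G : Type} [Group G]

lemma wcomm_eq_commutatorElement_inv (a b : G) : wcomm a b = ⁅a⁻¹, b⁻¹⁆ := by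
  simp [wcomm, commutatorElement_def]

lemma wcomm_mem_lowerCentralSeries_succ {k : ℕ} {a : G}
    (ha : a ∈ (⊤ : Subgroup G).lowerCentralSeries k) (b : G) :
    wcomm a b ∈ (⊤ : Subgroup G).lowerCentralSeries (k + 1) := by
  rw [wcomm_eq_commutatorElement_inv]
  exact Subgroup.commutator_mem_commutator (inv_mem ha) (Subgroup.mem_top _)

lemma foldl_wcomm_mem_lowerCentralSeries :
    ∀ (l : List G) {k : ℕ} {a : G}, a ∈ (⊤ : Subgroup G).lowerCentralSeries k →
      l.foldl wcomm a ∈ (⊤ : Subgroup G).lowerCentralSeries (k + l.length)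
  | [], _, _, ha => ha
  | b :: l, k, _, ha => by
    rw [List.foldl_cons, List.length_cons, ← add_assoc, add_right_comm]
    exact foldl_wcomm_mem_lowerCentralSeries l (wcomm_mem_lowerCentralSeries_succ ha b)

lemma wIter_succ_mem_lowerCentralSeries (n : ℕ) (x : Fin (n + 1) → G) :
    wIter (n + 1) x ∈ (⊤ : Subgroup G).lowerCentralSeries n := by
  simpa [wIter] using foldl_wcomm_mem_lowerCentralSeries (List.ofFn fun i : Fin n => x i.succ)
    (k := 0) (Subgroup.mem_top (x 0))

end LowerCentralSeries

lemma QuotientGroup.card_subtype_pi_mk {G ι : Type*} [Group G] [Finite ι] (N : Subgroup G)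
    (P : (ι → G ⧸ N) → Prop) :
    Nat.card {x : ι → G // P fun i => (x i : G ⧸ N)} =
      Nat.card {c // P c} * Nat.card N ^ Nat.card ι := by
  let e : (ι → G) ≃ (ι → G ⧸ N) × (ι → N) :=
    (Equiv.piCongrRight fun _ => Subgroup.groupEquivQuotientProdSubgroup).trans
      (Equiv.arrowProdEquivProdArrow _ _ _)
  have he : ∀ x, (e x).1 = fun i => (x i : G ⧸ N) := fun _ => rfl
  rw [Nat.card_congr ((e.subtypeEquiv fun x => by rw [he]).trans
    Equiv.prodSubtypeFstEquivSubtypeProd), Nat.card_prod, Nat.card_fun]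

theorem card_fiber_mul_card_pow_eq_of_compat {G H α β ι : Type*} [Group G] [Group H] [Finite ι]
    {N : Subgroup G} {M : Subgroup H} (φ : G ⧸ N ≃ H ⧸ M)
    {u : (ι → G) → α} {v : (ι → H) → β} {ψ : α → β} (hψ : Injective ψ)
    (hcompat : ∀ x y, (∀ i, φ (x i) = y i) → ψ (u x) = v y) (a : α) :
    Nat.card {x // u x = a} * Nat.card M ^ Nat.card ι =
      Nat.card {y // v y = ψ a} * Nat.card N ^ Nat.card ι := by
  set u' : (ι → G ⧸ N) → α := fun c => u fun i => (c i).out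
  set v' : (ι → H ⧸ M) → β := fun d => v fun i => (d i).out
  -- `x` and its chosen coset representatives are both `φ`-related to the same tuple in `H`.
  have hu : ∀ x, u x = u' fun i => x i := fun x => hψ <| by
    rw [hcompat x (fun i => (φ (x i)).out) (by simp),
      hcompat (fun i => (x i : G ⧸ N).out) (fun i => (φ (x i)).out) (by simp)]
  have hv : ∀ y, v y = v' fun i => y i := fun y => by
    rw [← hcompat (fun i => (φ.symm (y i)).out) y (by simp),
      hcompat (fun i => (φ.symm (y i)).out) (fun i => (y i : H ⧸ M).out) (by simp)]
  have htransfer : ∀ c, ψ (u' c) = v' fun i => φ (c i) := fun c => hcompat _ _ (by simp)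
  have hcosets : Nat.card {c // u' c = a} = Nat.card {d // v' d = ψ a} :=
    Nat.card_congr <| (Equiv.piCongrRight fun _ => φ).subtypeEquiv fun c => by
      rw [← hψ.eq_iff, htransfer]
      rfl
  have hG : Nat.card {x // u x = a} = Nat.card {c // u' c = a} * Nat.card N ^ Nat.card ι := by
    rw [← QuotientGroup.card_subtype_pi_mk N fun c => u' c = a]
    exact Nat.card_congr (Equiv.subtypeEquivRight fun x => by rw [hu x])
  have hH : Nat.card {y // v y = ψ a} = Nat.card {d // v' d = ψ a} * Nat.card M ^ Nat.card ι := by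
    rw [← QuotientGroup.card_subtype_pi_mk M fun d => v' d = ψ a]
    exact Nat.card_congr (Equiv.subtypeEquivRight fun y => by rw [hv y])
  rw [hG, hH, hcosets]
  ring

theorem stmt_13 {G H : Type} [Group G] [Fintype G] [Group H] [Fintype H] (n : ℕ)
    (φ : (G ⧸ Subgroup.upperCentralSeries G n) ≃* (H ⧸ Subgroup.upperCentralSeries H n))
    (ψ : ((⊤ : Subgroup G).lowerCentralSeries n) ≃* ((⊤ : Subgroup H).lowerCentralSeries n))
    (hcompat : ∀ (x : Fin (n+1) → G) (y : Fin (n+1) → H),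
      (∀ i, φ (QuotientGroup.mk (x i)) = QuotientGroup.mk (y i)) →
      ∀ hx : wIter (n+1) x ∈ (⊤ : Subgroup G).lowerCentralSeries n,
        (ψ ⟨wIter (n+1) x, hx⟩ : H) = wIter (n+1) y)
    (g : G) (hg : g ∈ (⊤ : Subgroup G).lowerCentralSeries n) :
    (Nat.card {x : Fin (n+1) → G // wIter (n+1) x = g} : ℚ) =
      ((Fintype.card G : ℚ) / (Fintype.card H : ℚ)) ^ (n+1) *
        (Nat.card {y : Fin (n+1) → H // wIter (n+1) y = (ψ ⟨g, hg⟩ : H)} : ℚ) := by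
  have hfibres := card_fiber_mul_card_pow_eq_of_compat φ.toEquiv
    (u := fun x => ⟨wIter (n + 1) x, wIter_succ_mem_lowerCentralSeries n x⟩) (v := wIter (n + 1))
    (ψ := fun a => (ψ a : H)) (Subtype.val_injective.comp ψ.injective)
    (fun x y hxy => hcompat x y hxy _) ⟨g, hg⟩
  simp only [Subtype.mk.injEq, Nat.card_fin] at hfibres
  rw [← Nat.card_eq_fintype_card, ← Nat.card_eq_fintype_card,
    Subgroup.card_eq_card_quotient_mul_card_subgroup (Subgroup.upperCentralSeries G n),
    Subgroup.card_eq_card_quotient_mul_card_subgroup (Subgroup.upperCentralSeries H n),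
    Nat.card_congr φ.toEquiv]
  have hq : (Nat.card (H ⧸ Subgroup.upperCentralSeries H n) : ℚ) ≠ 0 := by
    exact_mod_cast Nat.card_pos.ne'
  have hM : (Nat.card (Subgroup.upperCentralSeries H n) : ℚ) ≠ 0 := by
    exact_mod_cast Nat.card_pos.ne'
  push_cast
  rw [mul_div_mul_left _ _ hq, div_pow, div_mul_eq_mul_div, eq_div_iff (pow_ne_zero _ hM)]
  exact_mod_cast hfibres.trans (mul_comm _ _)
end

section
/- Let G be a finite group with cd(G) = {1, m}, and suppose G has an abelian normal subgroup N of index m such that every nonlinear irreducible character of G is induced from an irreducible (linear) character of N. Then for every n ≥ 3 and every nonlinear irreducible character χ of G, the inner product ⟨ζ^{w_{n−1}}_G · χ, χ⟩ ≤ m·|G|^{n−1}/|N|, where ζ^{w_{n−1}}_G(g) is the number of solutions of the iterated commutator equation [...[[x₁,x₂],x₃],...,x_{n−1}] = g. -/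
open scoped BigOperators

-- The character of `G` induced by a character `ψ` of a subgroup `N`.
open Classical in
noncomputable def indChar {G : Type} [Group G] [Fintype G] (N : Subgroup G)
    (ψ : N → ℂ) (g : G) : ℂ :=
  (Nat.card ↥N : ℂ)⁻¹ *
    ∑ x : G, if h : x * g * x⁻¹ ∈ N then ψ ⟨x * g * x⁻¹, h⟩ else 0


/-!
Since `χ(1) = m = |G : N|` and `χ = ψ^G` has degree `|G : N| ψ(1)`, the character `ψ` is linear,
so its values are roots of unity and every value of `χ = ψ^G` has absolute value at most `m`.
The solution counts `ζ(g)` add up to `|G|^(n-1)`, hence the inner product is at most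
`m² |G|^(n-2) = m |G|^(n-1) / |N|`.
-/

lemma LinearMap.trace_pow_of_finrank_eq_one {K V : Type*} [Field K] [AddCommGroup V] [Module K V]
    (h1 : Module.finrank K V = 1) (f : V →ₗ[K] V) (k : ℕ) :
    LinearMap.trace K V (f ^ k) = LinearMap.trace K V f ^ k := by
  have : Module.Finite K V := Module.finite_of_finrank_eq_succ h1
  obtain ⟨c, rfl, -⟩ := f.existsUnique_eq_smul_id_of_finrank_eq_one h1
  simp [smul_pow, h1]

theorem FDRep.norm_character_eq_one {G : Type*} [Group G] [Finite G] (V : FDRep ℂ G)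
    (h1 : V.character 1 = 1) (g : G) : ‖V.character g‖ = 1 := by
  have hdim : Module.finrank ℂ V = 1 := by exact_mod_cast V.char_one.symm.trans h1
  refine Complex.norm_eq_one_of_pow_eq_one (n := orderOf g) ?_ (orderOf_pos g).ne'
  rw [FDRep.character, ← LinearMap.trace_pow_of_finrank_eq_one hdim, ← map_pow,
    pow_orderOf_eq_one, ← FDRep.character, h1]

theorem sum_card_fiber {α β : Type*} [Fintype α] [Fintype β] (f : α → β) :
    ∑ b, Nat.card {a // f a = b} = Nat.card α := by
  rw [← Nat.card_sigma, Nat.card_congr (Equiv.sigmaFiberEquiv f)]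

theorem sum_card_fiber_mul_le {α β : Type*} [Fintype α] [Fintype β] (f : α → β) {φ : β → ℝ}
    {B : ℝ} (hφ : ∀ b, φ b ≤ B) :
    ∑ b, (Nat.card {a // f a = b} : ℝ) * φ b ≤ Nat.card α * B := by
  calc ∑ b, (Nat.card {a // f a = b} : ℝ) * φ b
      ≤ ∑ b, (Nat.card {a // f a = b} : ℝ) * B := by gcongr with b; exact hφ b
    _ = Nat.card α * B := by rw [← Finset.sum_mul, ← Nat.cast_sum, sum_card_fiber]

theorem Subgroup.inv_card_mul_card_eq_index {G : Type*} [Group G] [Finite G] {K : Type*}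
    [Field K] [CharZero K] (N : Subgroup G) :
    (Nat.card N : K)⁻¹ * Nat.card G = N.index := by
  rw [← N.card_mul_index, Nat.cast_mul, inv_mul_cancel_left₀ (by simp [Nat.card_pos.ne'])]

section indChar

variable {G : Type} [Group G] [Fintype G] (N : Subgroup G) (ψ : N → ℂ)

theorem indChar_one : indChar N ψ 1 = N.index * ψ 1 := by
  classical
  have hterm (x : G) :
      (if h : x * 1 * x⁻¹ ∈ N then ψ ⟨x * 1 * x⁻¹, h⟩ else 0) = ψ 1 := by
    simp only [mul_one, mul_inv_cancel, N.one_mem, dite_true]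
    rfl
  rw [indChar, Finset.sum_congr rfl fun x _ => hterm x, Finset.sum_const, Finset.card_univ,
    nsmul_eq_mul, ← mul_assoc, ← Nat.card_eq_fintype_card, N.inv_card_mul_card_eq_index]

theorem norm_indChar_le (hψ : ∀ h, ‖ψ h‖ ≤ 1) (g : G) : ‖indChar N ψ g‖ ≤ N.index := by
  classical
  have hterm (x : G) :
      ‖if h : x * g * x⁻¹ ∈ N then ψ ⟨x * g * x⁻¹, h⟩ else 0‖ ≤ 1 := by
    split_ifs
    · exact hψ _
    · simp
  calc ‖indChar N ψ g‖
      ≤ (Nat.card N : ℝ)⁻¹ * ∑ _x : G, (1 : ℝ) := by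
        rw [indChar, norm_mul, norm_inv, Complex.norm_natCast]
        gcongr
        exact (norm_sum_le _ _).trans (Finset.sum_le_sum fun x _ => hterm x)
    _ = N.index := by
        simp [← Nat.card_eq_fintype_card, N.inv_card_mul_card_eq_index]

end indChar

theorem stmt_15_general {G : Type} [Group G] [Fintype G] (m : ℕ) (N : Subgroup G)
    (hidx : N.index = m)
    (hcd : ∀ χ : G → ℂ, IsIrrChar G χ → χ 1 = 1 ∨ χ 1 = (m : ℂ))
    (hind : ∀ χ : G → ℂ, IsIrrChar G χ → χ 1 ≠ 1 →
      ∃ ψ : N → ℂ, IsIrrChar N ψ ∧ ∀ g : G, χ g = indChar N ψ g)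
    (n : ℕ) (χ : G → ℂ) (hχ : IsIrrChar G χ) (hχnl : χ 1 ≠ 1) :
    (Fintype.card G : ℝ)⁻¹ *
        ∑ g : G, (Nat.card {x : Fin (n-1) → G // wIter (n-1) x = g} : ℝ) *
          Complex.normSq (χ g) ≤
      (m : ℝ) * (Fintype.card G : ℝ) ^ (n - 1) / (Nat.card ↥N : ℝ) := by
  obtain ⟨ψ, ⟨W, -, rfl⟩, hχψ⟩ := hind χ hχ hχnl
  have hidx0 : N.index ≠ 0 := Subgroup.index_ne_zero_of_finite
  have hW1 : W.character 1 = 1 := by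
    have h := (hcd χ hχ).resolve_left hχnl
    rwa [hχψ, indChar_one, ← hidx, mul_eq_left₀ (by exact_mod_cast hidx0)] at h
  have hχsq (g : G) : Complex.normSq (χ g) ≤ (m : ℝ) ^ 2 := by
    rw [← Complex.sq_norm, hχψ, ← hidx]
    gcongr
    exact norm_indChar_le N _ (fun h => (W.norm_character_eq_one hW1 h).le) g
  have hGN : (Fintype.card G : ℝ) = m * Nat.card N := by
    rw [← hidx, ← Nat.card_eq_fintype_card, ← N.index_mul_card, Nat.cast_mul]
  calc _ ≤ (Fintype.card G : ℝ)⁻¹ * (Nat.card (Fin (n-1) → G) * (m : ℝ) ^ 2) := by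
        gcongr
        exact sum_card_fiber_mul_le _ hχsq
    _ = _ := by
        have hN0 : (Nat.card N : ℝ) ≠ 0 := by simp [Nat.card_pos.ne']
        have hm0 : (m : ℝ) ≠ 0 := by simp [← hidx, hidx0]
        rw [Nat.card_fun, Nat.card_fin, Nat.card_eq_fintype_card, Nat.cast_pow, hGN]
        field_simp

theorem stmt_15 {G : Type} [Group G] [Fintype G] (m : ℕ) (N : Subgroup G) [N.Normal]
    (habelian : ∀ a b : N, a * b = b * a)
    (hidx : N.index = m)
    (hcd : ∀ χ : G → ℂ, IsIrrChar G χ → χ 1 = 1 ∨ χ 1 = (m : ℂ))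
    (hind : ∀ χ : G → ℂ, IsIrrChar G χ → χ 1 ≠ 1 →
      ∃ ψ : N → ℂ, IsIrrChar N ψ ∧ ∀ g : G, χ g = indChar N ψ g)
    (n : ℕ) (hn : 3 ≤ n) (χ : G → ℂ) (hχ : IsIrrChar G χ) (hχnl : χ 1 ≠ 1) :
    (Fintype.card G : ℝ)⁻¹ *
        ∑ g : G, (Nat.card {x : Fin (n-1) → G // wIter (n-1) x = g} : ℝ) *
          Complex.normSq (χ g) ≤
      (m : ℝ) * (Fintype.card G : ℝ) ^ (n - 1) / (Nat.card ↥N : ℝ) :=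
  stmt_15_general m N hidx hcd hind n χ hχ hχnl
end

section
/- Let G be a finite group such that (G, Z(G)) is a Camina pair, i.e., gZ(G) ⊆ Cl_G(g) for every g ∈ G \ Z(G). Then every χ ∈ Irr(G|Z(G)) (irreducible characters not containing Z(G) in their kernel) vanishes on G \ Z(G) and has degree |G:Z(G)|^{1/2}, and the number of such characters is |Z(G)| − 1. -/
open scoped BigOperators

/-!
By Schur's lemma the centre `Z` acts on an irreducible representation `V` through the linear
character `λ_V(z) = χ(z) / χ(1)`. If `λ_V ≠ 1`, pick `z` with `λ_V(z) ≠ 1`: the Camina condition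
makes `g` and `gz` conjugate for `g ∉ Z`, so `χ(g) = χ(zg) = λ_V(z) χ(g)` forces `χ(g) = 0`, and
then `‖χ‖ = 1` reads `|Z| χ(1)² = |G|`. Such a `χ` is therefore determined by `λ_V`. Conversely
every `λ ≠ 1` occurs, as the central character of any simple subrepresentation of the
`λ`-eigenspace of `Z` in the regular representation, so these characters are counted by the
`|Z| - 1` nontrivial characters of the abelian group `Z`.
-/

open CategoryTheory Limits

namespace Representation

variable {k G V : Type} [Field k] [Group G] [AddCommGroup V] [Module k V]

def centralEigenspace (ρ : Representation k G V) (μ : Subgroup.center G →* kˣ) :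
    Submodule k V :=
  ⨅ z : Subgroup.center G, Module.End.eigenspace (ρ z) (μ z)

theorem centralEigenspace_le_comap (ρ : Representation k G V) (μ : Subgroup.center G →* kˣ)
    (g : G) : ρ.centralEigenspace μ ≤ (ρ.centralEigenspace μ).comap (ρ g) := by
  intro v hv
  simp only [centralEigenspace, Submodule.mem_comap, Submodule.mem_iInf,
    Module.End.mem_eigenspace_iff] at hv ⊢
  intro z
  rw [← Module.End.mul_apply, ← map_mul, ← Subgroup.mem_center_iff.1 z.2 g, map_mul,
    Module.End.mul_apply, hv z, map_smul]

open TannakaDuality.FiniteGroup in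
theorem centralEigenspace_rightRegular_ne_bot (μ : Subgroup.center G →* kˣ) :
    (rightRegular (k := k) (G := G)).centralEigenspace μ ≠ ⊥ := by
  classical
  let e : G → k := fun x => if h : x ∈ Subgroup.center G then (μ ⟨x, h⟩ : k) else 0
  have he : e ∈ (rightRegular (k := k) (G := G)).centralEigenspace μ := by
    simp only [centralEigenspace, Submodule.mem_iInf, Module.End.mem_eigenspace_iff]
    intro z
    funext x
    by_cases hx : x ∈ Subgroup.center G
    · have hxz : x * z ∈ Subgroup.center G := mul_mem hx z.2
      simp [e, hx, hxz, show (⟨x * z, hxz⟩ : Subgroup.center G) = ⟨x, hx⟩ * z from rfl,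
        mul_comm]
    · have hxz : x * z ∉ Subgroup.center G := fun h => hx (by simpa using mul_mem h (inv_mem z.2))
      simp [e, hx, hxz]
  have he0 : e ≠ 0 := fun h => by simpa [e] using congrFun h 1
  exact (Submodule.ne_bot_iff _).2 ⟨e, he, he0⟩

end Representation

namespace FDRep

section Category

variable {k G : Type} [Field k] [Group G]

theorem hom_comm_apply {V W : FDRep k G} (f : V ⟶ W) (g : G) (v : V) :
    f.hom.hom.hom (V.ρ g v) = W.ρ g (f.hom.hom.hom v) :=
  congr(($(f.comm g)).hom.hom v)

theorem injective_of_mono {X Y : FDRep k G} (f : X ⟶ Y) [Mono f] :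
    Function.Injective f.hom.hom.hom :=
  (ModuleCat.mono_iff_injective
    ((forget₂ (FGModuleCat k) (ModuleCat k)).map ((Action.forget _ G).map f))).1 inferInstance

theorem isIso_of_bijective {X Y : FDRep k G} (f : X ⟶ Y)
    (hf : Function.Bijective f.hom.hom.hom) : IsIso f := by
  have : IsIso ((forget (FDRep k G)).map f) := (isIso_iff_bijective _).2 hf
  exact isIso_of_reflects_iso f (forget (FDRep k G))

theorem strictMono_finrank_subobject (X : FDRep k G) :
    StrictMono fun P : Subobject X => Module.finrank k (P : FDRep k G) := by
  intro P Q hPQ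
  have hinj := injective_of_mono (Subobject.ofLE P Q hPQ.le)
  refine (LinearMap.finrank_le_finrank_of_injective hinj).lt_of_ne fun hrank => hPQ.ne ?_
  have hsurj := (LinearMap.injective_iff_surjective_of_finrank_eq_finrank hrank).1 hinj
  have := isIso_of_bijective _ ⟨hinj, hsurj⟩
  exact Subobject.eq_of_comm (asIso (Subobject.ofLE P Q hPQ.le)) (Subobject.ofLE_arrow _)

instance (X : FDRep k G) : IsArtinianObject X :=
  ⟨(strictMono_finrank_subobject X).wellFoundedLT⟩

theorem nontrivial_of_simple (V : FDRep k G) [Simple V] : Nontrivial V := by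
  by_contra h
  rw [not_nontrivial_iff_subsingleton] at h
  exact id_nonzero V (by ext v; exact Subsingleton.elim _ _)

end Category

section CentralCharacter

variable {k G : Type} [Field k] [Group G]

theorem character_mul_of_ρ_eq_smul (V : FDRep k G) {z : G} {c : k}
    (hc : V.ρ z = c • 1) (g : G) : V.character (z * g) = c * V.character g := by
  rw [character, map_mul, hc, smul_mul_assoc, one_mul, map_smul, smul_eq_mul, character]

theorem exists_ρ_eq_smul_of_mem_center [IsAlgClosed k] (V : FDRep k G) [Simple V] {z : G}
    (hz : z ∈ Subgroup.center G) : ∃ c : k, V.ρ z = c • 1 := by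
  let φ : V ⟶ V := ⟨Action.ρ V z, fun g => by
    rw [← End.mul_def, ← End.mul_def, ← map_mul, ← map_mul, Subgroup.mem_center_iff.1 hz]⟩
  obtain ⟨c, hc⟩ := endomorphism_simple_eq_smul_id k φ
  refine ⟨c, ?_⟩
  ext v
  exact congr(($hc.symm).hom.hom.hom v)

variable [CharZero k]

theorem character_one_ne_zero (V : FDRep k G) [Simple V] : V.character 1 ≠ 0 := by
  have := nontrivial_of_simple V
  rw [char_one, Nat.cast_ne_zero]
  exact Module.finrank_pos.ne'

variable [IsAlgClosed k]

theorem character_mul_of_mem_center (V : FDRep k G) [Simple V] {z : G}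
    (hz : z ∈ Subgroup.center G) (g : G) :
    V.character (z * g) = V.character z / V.character 1 * V.character g := by
  obtain ⟨c, hc⟩ := exists_ρ_eq_smul_of_mem_center V hz
  have hz1 := character_mul_of_ρ_eq_smul V hc 1
  rw [mul_one] at hz1
  rw [character_mul_of_ρ_eq_smul V hc, hz1, mul_div_cancel_right₀ _ (character_one_ne_zero V)]

noncomputable def centralChar (V : FDRep k G) [Simple V] : Subgroup.center G →* kˣ :=
  MonoidHom.toHomUnits
    { toFun z := V.character z / V.character 1
      map_one' := div_self (character_one_ne_zero V)
      map_mul' z w := by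
        rw [Subgroup.coe_mul, character_mul_of_mem_center V z.2, mul_div_assoc] }

variable (V : FDRep k G) [Simple V]

theorem coe_centralChar_apply (z : Subgroup.center G) :
    (V.centralChar z : k) = V.character z / V.character 1 :=
  rfl

theorem character_center_mul (z : Subgroup.center G) (g : G) :
    V.character (z * g) = V.centralChar z * V.character g :=
  character_mul_of_mem_center V z.2 g

theorem character_center (z : Subgroup.center G) :
    V.character z = V.centralChar z * V.character 1 := by
  rw [← character_center_mul, mul_one]

theorem ρ_center (z : Subgroup.center G) : V.ρ z = (V.centralChar z : k) • 1 := by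
  obtain ⟨c, hc⟩ := exists_ρ_eq_smul_of_mem_center V z.2
  have hz1 := character_mul_of_ρ_eq_smul V hc 1
  rw [mul_one] at hz1
  rwa [coe_centralChar_apply, hz1, mul_div_cancel_right₀ _ (character_one_ne_zero V)]

theorem centralChar_ne_one_iff :
    V.centralChar ≠ 1 ↔ ∃ z ∈ Subgroup.center G, V.character z ≠ V.character 1 := by
  simp only [ne_eq, DFunLike.ext_iff, not_forall, MonoidHom.one_apply, Units.ext_iff,
    coe_centralChar_apply, Units.val_one, div_eq_one_iff_eq (character_one_ne_zero V),
    Subtype.exists, exists_prop]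

theorem centralChar_eq_of_mono {U : FDRep k G} {μ : Subgroup.center G →* kˣ}
    (hU : ∀ z : Subgroup.center G, U.ρ z = (μ z : k) • 1) (f : V ⟶ U) [Mono f] :
    V.centralChar = μ := by
  have := nontrivial_of_simple V
  obtain ⟨v, hv⟩ := exists_ne (0 : V)
  have hfv : f.hom.hom.hom v ≠ 0 := (map_ne_zero_iff _ (injective_of_mono f)).2 hv
  ext z
  have hcomm := hom_comm_apply f z v
  rw [ρ_center, hU, LinearMap.smul_apply, LinearMap.smul_apply, Module.End.one_apply,
    Module.End.one_apply, map_smul] at hcomm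
  exact smul_left_injective k hfv hcomm

open TannakaDuality.FiniteGroup in
theorem exists_simple_centralChar_eq [Finite G] (μ : Subgroup.center G →* kˣ) :
    ∃ (V : FDRep k G) (_ : Simple V), V.centralChar = μ := by
  let ρ := rightRegular (k := k) (G := G)
  let U := FDRep.of (ρ.subrepresentation _ (ρ.centralEigenspace_le_comap μ))
  have hU (z : Subgroup.center G) : U.ρ z = (μ z : k) • 1 := by
    ext ⟨v, hv⟩ : 2
    exact Module.End.mem_eigenspace_iff.1 ((Submodule.mem_iInf _).1 hv z)
  have hUne : ¬IsZero U := fun hZ => by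
    obtain ⟨v, hv, hv0⟩ :=
      (Submodule.ne_bot_iff _).1 (Representation.centralEigenspace_rightRegular_ne_bot μ)
    exact hv0 congr(Subtype.val (($(hZ.eq_of_src (𝟙 U) 0)).hom.hom.hom ⟨v, hv⟩))
  obtain ⟨Y, hY⟩ := exists_simple_subobject hUne
  exact ⟨Y, hY, centralChar_eq_of_mono (Y : FDRep k G) hU Y.arrow⟩

end CentralCharacter

end FDRep

def IsCaminaPair (G : Type) [Group G] (N : Subgroup G) : Prop :=
  ∀ g : G, g ∉ N → ∀ z ∈ N, IsConj g (g * z)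

namespace FDRep

variable {k G : Type} [Field k] [IsAlgClosed k] [CharZero k] [Group G]
  (V : FDRep k G) [Simple V]

theorem character_eq_zero_of_isConj_mul {z : Subgroup.center G} (hz : V.centralChar z ≠ 1)
    {g : G} (hg : IsConj g (g * z)) : V.character g = 0 := by
  obtain ⟨c, hc⟩ := isConj_iff.1 hg
  have hfix : V.character g = V.centralChar z * V.character g := by
    rw [← character_center_mul, ← Subgroup.mem_center_iff.1 z.2 g, ← hc, char_conj]
  by_contra hne
  exact hz (Units.val_eq_one.1 (mul_right_cancel₀ hne (hfix.symm.trans (one_mul _).symm)))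

theorem character_eq_zero_of_notMem_center (hG : IsCaminaPair G (Subgroup.center G))
    (hV : V.centralChar ≠ 1) : ∀ g ∉ Subgroup.center G, V.character g = 0 := by
  intro g hg
  obtain ⟨z, hz⟩ := DFunLike.ne_iff.1 hV
  exact character_eq_zero_of_isConj_mul V hz (hG g hg z z.2)

theorem character_one_sq_eq_index [Fintype G]
    (hV : ∀ g ∉ Subgroup.center G, V.character g = 0) :
    V.character 1 ^ 2 = ((Subgroup.center G).index : k) := by
  classical
  have hterm (z : Subgroup.center G) :
      V.character z * V.character (z : G)⁻¹ = V.character 1 ^ 2 := by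
    have h := character_center_mul V z (z : G)⁻¹
    rw [mul_inv_cancel] at h
    rw [character_center, sq, h]
    ring
  have hnorm := (simple_iff_char_is_norm_one V).1 ‹_›
  rw [← Fintype.sum_subtype_add_sum_subtype (· ∈ Subgroup.center G)] at hnorm
  have hoff : ∑ g : {g // g ∉ Subgroup.center G}, V.character g * V.character (g : G)⁻¹ = 0 :=
    Finset.sum_eq_zero fun g _ => by rw [hV g g.2, zero_mul]
  rw [hoff, add_zero, Finset.sum_congr rfl fun z _ => hterm z, Finset.sum_const,
    Finset.card_univ, nsmul_eq_mul, Fintype.card_eq_nat_card,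
    ← (Subgroup.center G).card_mul_index, Nat.cast_mul] at hnorm
  exact mul_left_cancel₀ (Nat.cast_ne_zero.2 Nat.card_pos.ne') hnorm

theorem character_eq_of_centralChar_eq [Fintype G] (W : FDRep k G) [Simple W]
    (hV : ∀ g ∉ Subgroup.center G, V.character g = 0)
    (hW : ∀ g ∉ Subgroup.center G, W.character g = 0)
    (h : V.centralChar = W.centralChar) : V.character = W.character := by
  have hdeg : V.character 1 = W.character 1 := by
    have hsq := (character_one_sq_eq_index V hV).trans (character_one_sq_eq_index W hW).symm
    rw [char_one, char_one] at hsq ⊢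
    exact congrArg _ (Nat.pow_left_injective two_ne_zero (by exact_mod_cast hsq))
  funext g
  by_cases hg : g ∈ Subgroup.center G
  · rw [show g = ((⟨g, hg⟩ : Subgroup.center G) : G) from rfl, character_center,
      character_center, h, hdeg]
  · rw [hV g hg, hW g hg]

end FDRep

theorem card_irrChar_nontrivial_on_center_of_isCaminaPair {G : Type} [Group G] [Fintype G]
    (hG : IsCaminaPair G (Subgroup.center G)) :
    Nat.card {χ : G → ℂ // IsIrrChar G χ ∧ ∃ z ∈ Subgroup.center G, χ z ≠ χ 1} =
      Nat.card {μ : Subgroup.center G →* ℂˣ // μ ≠ 1} := by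
  choose V hV hVμ using fun μ : Subgroup.center G →* ℂˣ => FDRep.exists_simple_centralChar_eq μ
  let Φ (μ : {μ : Subgroup.center G →* ℂˣ // μ ≠ 1}) :
      {χ : G → ℂ // IsIrrChar G χ ∧ ∃ z ∈ Subgroup.center G, χ z ≠ χ 1} :=
    ⟨(V μ).character, ⟨V μ, hV μ, rfl⟩,
      (FDRep.centralChar_ne_one_iff (V μ)).1 (by rw [hVμ]; exact μ.2)⟩
  refine (Nat.card_eq_of_bijective Φ ⟨fun μ ν h => ?_, ?_⟩).symm
  · have := hV μ
    have := hV ν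
    ext z : 3
    rw [← hVμ μ, ← hVμ ν, FDRep.coe_centralChar_apply, FDRep.coe_centralChar_apply]
    simp only [Φ, Subtype.ext_iff] at h
    rw [h]
  · rintro ⟨χ, ⟨W, hW, rfl⟩, hz⟩
    have hWμ := (FDRep.centralChar_ne_one_iff W).2 hz
    have := hV W.centralChar
    refine ⟨⟨W.centralChar, hWμ⟩, Subtype.ext ?_⟩
    exact FDRep.character_eq_of_centralChar_eq _ _
      (FDRep.character_eq_zero_of_notMem_center _ hG (by rw [hVμ]; exact hWμ))
      (W.character_eq_zero_of_notMem_center hG hWμ) (hVμ _)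

open scoped IsMulCommutative in
theorem card_monoidHom_ne_one_of_hasEnoughRootsOfUnity (A M : Type) [Group A]
    [IsMulCommutative A] [Finite A] [CommMonoid M]
    [HasEnoughRootsOfUnity M (Monoid.exponent A)] :
    Nat.card {μ : A →* Mˣ // μ ≠ 1} = Nat.card A - 1 := by
  obtain ⟨e⟩ := CommGroup.monoidHom_mulEquiv_of_hasEnoughRootsOfUnity A M
  rw [Nat.card_congr (e.toEquiv.subtypeEquiv (q := (· ≠ 1)) fun _ => e.map_ne_one_iff.symm)]
  have := Fintype.ofFinite A
  classical
  rw [Nat.card_eq_fintype_card, Nat.card_eq_fintype_card]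
  exact Set.card_ne_eq 1

theorem stmt_17_general {G : Type} [Group G] [Fintype G]
    (hCP : ∀ g : G, g ∉ Subgroup.center G →
      ∀ z ∈ Subgroup.center G, IsConj g (g * z)) :
    (∀ χ : G → ℂ, IsIrrChar G χ → (∃ z ∈ Subgroup.center G, χ z ≠ χ 1) →
      (∀ g : G, g ∉ Subgroup.center G → χ g = 0) ∧
        χ 1 ^ 2 = ((Subgroup.center G).index : ℂ)) ∧
    Nat.card {χ : G → ℂ // IsIrrChar G χ ∧ ∃ z ∈ Subgroup.center G, χ z ≠ χ 1} =
      Nat.card ↥(Subgroup.center G) - 1 := by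
  refine ⟨?_, ?_⟩
  · rintro χ ⟨V, hV, rfl⟩ hz
    have hvan := V.character_eq_zero_of_notMem_center hCP ((V.centralChar_ne_one_iff).2 hz)
    exact ⟨hvan, V.character_one_sq_eq_index hvan⟩
  · have : NeZero (Monoid.exponent (Subgroup.center G) : ℂ) :=
      ⟨Nat.cast_ne_zero.2 Monoid.exponent_ne_zero_of_finite⟩
    rw [card_irrChar_nontrivial_on_center_of_isCaminaPair hCP,
      card_monoidHom_ne_one_of_hasEnoughRootsOfUnity]

theorem stmt_17 {G : Type} [Group G] [Fintype G]
    (hZbot : Subgroup.center G ≠ ⊥) (hZtop : Subgroup.center G ≠ ⊤)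
    (hCP : ∀ g : G, g ∉ Subgroup.center G →
      ∀ z ∈ Subgroup.center G, IsConj g (g * z)) :
    (∀ χ : G → ℂ, IsIrrChar G χ → (∃ z ∈ Subgroup.center G, χ z ≠ χ 1) →
      (∀ g : G, g ∉ Subgroup.center G → χ g = 0) ∧
        χ 1 ^ 2 = ((Subgroup.center G).index : ℂ)) ∧
    Nat.card {χ : G → ℂ // IsIrrChar G χ ∧ ∃ z ∈ Subgroup.center G, χ z ≠ χ 1} =
      Nat.card ↥(Subgroup.center G) - 1 :=
  stmt_17_general hCP
end
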